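/- Let q = √5 − 2 (the diamond probability corresponding to the critical percolation parameter p_c = (√5−1)/2 of the diamond hierarchical lattice). Then for all n ≥ 0, ∫ z dμ_n(z) ≥ ((14 − 4√5)/3)^n. Consequently, the annealed resistance exponent satisfies α = lim_{n→∞} (1/n)·log(∫ z dμ_n(z)) ≥ log((14 − 4√5)/3) > 0. -/

import Mathlib

open MeasureTheory ProbabilityTheory Filter

noncomputable def Sfun : ℝ × ℝ → ℝ := fun p => p.1 + p.2

noncomputable def Dfun : ℝ × ℝ × ℝ × ℝ → ℝ := fun p =>
  ((p.1 + p.2.1) * (p.2.2.1 + p.2.2.2)) / (p.1 + p.2.1 + p.2.2.1 + p.2.2.2)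

/-- One-step resistance recursion map on Borel measures on ℝ. -/
noncomputable def Tq (q : ℝ) (μ : Measure ℝ) : Measure ℝ :=
  ENNReal.ofReal (1 - q) • Measure.map Sfun (μ.prod μ) +
    ENNReal.ofReal q • Measure.map Dfun (μ.prod (μ.prod (μ.prod μ)))

/-- μₙ = T_qⁿ δ₁ : law of the two-terminal resistance after n replacement steps. -/
noncomputable def mu (q : ℝ) (n : ℕ) : Measure ℝ := (Tq q)^[n] (Measure.dirac 1)

/-!
Write `κ = S_*(μ ⊗ μ)` for the series law; then `T_q μ = (1 - q) κ + q par_*(κ ⊗ κ)` with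
`par (a, b) = a b / (a + b)`.

Lower bound: the pointwise inequality `t² par (a, b) ≥ a b (2t - a - b)` integrates to
`E par ≥ 2 m / 3` when `κ` comes from a law with mean `m` and `E R² ≤ 2 m²`, so the mean grows by
the factor `2 - 4q/3`; since `par² ≤ a b / 4`, the condition `E R² ≤ 2 m²` is preserved as long as
`6 - 5q ≤ 2 (2 - 4q/3)²`. At `q = √5 - 2` the factor is `(14 - 4√5)/3 > 1`.

Limit: `S` and `par` are monotone and concave in each argument, so `T_q` is monotone for the
increasing concave order; by Jensen `μ_k ≤ δ_{E R_k}` in that order, and `T_q` commutes with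
scaling, hence `E R_{n+k} ≤ E R_n · E R_k`. Fekete's lemma applied to `log E R_n` gives the limit.
-/

open Set

noncomputable def par (r : ℝ × ℝ) : ℝ := r.1 * r.2 / (r.1 + r.2)

noncomputable def seriesLaw (μ : Measure ℝ) : Measure ℝ := (μ.prod μ).map Sfun

lemma measurable_Sfun : Measurable Sfun := measurable_fst.add measurable_snd

lemma measurable_Dfun : Measurable Dfun := by unfold Dfun; fun_prop

lemma measurable_par : Measurable par := by unfold par; fun_prop

instance (μ : Measure ℝ) [SFinite μ] : SFinite (seriesLaw μ) := by
  unfold seriesLaw; infer_instance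

instance (μ : Measure ℝ) [IsProbabilityMeasure μ] : IsProbabilityMeasure (seriesLaw μ) :=
  Measure.isProbabilityMeasure_map measurable_Sfun.aemeasurable

instance (q : ℝ) (μ : Measure ℝ) [SFinite μ] : SFinite (Tq q μ) := by
  unfold Tq; infer_instance

lemma Dfun_comp_prodAssoc :
    Dfun ∘ MeasurableEquiv.prodAssoc (α := ℝ) (β := ℝ) (γ := ℝ × ℝ) = par ∘ Prod.map Sfun Sfun := by
  funext ⟨⟨x₁, x₂⟩, x₃, x₄⟩
  simp only [Function.comp_apply, MeasurableEquiv.prodAssoc, MeasurableEquiv.coe_mk,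
    Equiv.prodAssoc_apply, Dfun, par, Sfun, Prod.map]
  ring

lemma map_Dfun_prod (μ : Measure ℝ) [SFinite μ] :
    (μ.prod (μ.prod (μ.prod μ))).map Dfun = ((seriesLaw μ).prod (seriesLaw μ)).map par := by
  rw [← Measure.prodAssoc_prod, Measure.map_map measurable_Dfun (MeasurableEquiv.measurable _),
    Dfun_comp_prodAssoc, ← Measure.map_map measurable_par (measurable_Sfun.prodMap measurable_Sfun),
    ← Measure.map_prod_map _ _ measurable_Sfun measurable_Sfun]
  rfl

lemma Tq_eq (q : ℝ) (μ : Measure ℝ) [SFinite μ] :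
    Tq q μ = ENNReal.ofReal (1 - q) • seriesLaw μ +
      ENNReal.ofReal q • ((seriesLaw μ).prod (seriesLaw μ)).map par := by
  rw [Tq, map_Dfun_prod]
  rfl

lemma mu_succ (q : ℝ) (n : ℕ) : mu q (n + 1) = Tq q (mu q n) :=
  Function.iterate_succ_apply' _ _ _

instance (q : ℝ) (n : ℕ) : SFinite (mu q n) := by
  induction n with
  | zero => exact inferInstanceAs (SFinite (Measure.dirac (1 : ℝ)))
  | succ n ih => rw [mu_succ]; infer_instance

lemma par_comm (a b : ℝ) : par (a, b) = par (b, a) := by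
  rw [par, par, mul_comm, add_comm]

lemma par_pos {a b : ℝ} (ha : 0 < a) (hb : 0 < b) : 0 < par (a, b) :=
  div_pos (mul_pos ha hb) (add_pos ha hb)

lemma par_mul_mul (t a b : ℝ) : par (t * a, t * b) = t * par (a, b) := by
  rcases eq_or_ne t 0 with rfl | ht
  · simp [par]
  · simp only [par]
    rw [show t * a * (t * b) = t * (a * b) * t by ring, show t * a + t * b = (a + b) * t by ring,
      mul_div_mul_right _ _ ht, mul_div_assoc]

lemma continuousOn_par : ContinuousOn par (Ioi 0 ×ˢ Ioi 0) :=
  ContinuousOn.div (by fun_prop) (by fun_prop) fun p hp => (add_pos hp.1 hp.2).ne'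

lemma par_mem_Icc {lo hi a b : ℝ} (hlo : 0 < lo) (ha : a ∈ Icc (2 * lo) (2 * hi))
    (hb : b ∈ Icc (2 * lo) (2 * hi)) : par (a, b) ∈ Icc lo hi := by
  obtain ⟨ha₁, ha₂⟩ := ha
  obtain ⟨hb₁, hb₂⟩ := hb
  have hab : 0 < a + b := by linarith
  simp only [par, mem_Icc, le_div_iff₀ hab, div_le_iff₀ hab]
  constructor <;> nlinarith

lemma mul_mul_sub_le_sq_mul_par {a b : ℝ} (ha : 0 ≤ a) (hb : 0 ≤ b) (hab : 0 < a + b) (t : ℝ) :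
    a * b * (2 * t - (a + b)) ≤ t ^ 2 * par (a, b) := by
  rw [par, mul_div_assoc', le_div_iff₀ hab]
  nlinarith [mul_nonneg (mul_nonneg ha hb) (sq_nonneg (t - (a + b)))]

lemma par_sq_le {a b : ℝ} (ha : 0 ≤ a) (hb : 0 ≤ b) (hab : 0 < a + b) :
    par (a, b) ^ 2 ≤ a * b / 4 := by
  rw [par, div_pow, div_le_div_iff₀ (by positivity) (by norm_num)]
  nlinarith [mul_nonneg (mul_nonneg ha hb) (sq_nonneg (a - b))]

lemma integral_Tq {q : ℝ} (hq : q ∈ Icc (0 : ℝ) 1) {μ : Measure ℝ} [IsProbabilityMeasure μ]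
    {f : ℝ → ℝ} (hf : Measurable f) (hκ : Integrable f (seriesLaw μ))
    (hpar : Integrable (f ∘ par) ((seriesLaw μ).prod (seriesLaw μ))) :
    ∫ x, f x ∂(Tq q μ) = (1 - q) * ∫ x, f x ∂(seriesLaw μ) +
      q * ∫ p, f (par p) ∂((seriesLaw μ).prod (seriesLaw μ)) := by
  have hmap : Integrable f (((seriesLaw μ).prod (seriesLaw μ)).map par) :=
    (integrable_map_measure hf.aestronglyMeasurable measurable_par.aemeasurable).2 hpar
  rw [Tq_eq, integral_add_measure (hκ.smul_measure ENNReal.ofReal_ne_top)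
      (hmap.smul_measure ENNReal.ofReal_ne_top), integral_smul_measure, integral_smul_measure,
    ENNReal.toReal_ofReal (sub_nonneg.2 hq.2), ENNReal.toReal_ofReal hq.1,
    integral_map measurable_par.aemeasurable hf.aestronglyMeasurable]
  rfl

lemma ae_mem_prod {α β : Type*} [MeasurableSpace α] [MeasurableSpace β] {μ : Measure α}
    {ν : Measure β} [SFinite ν] {s : Set α} {t : Set β} (hs : ∀ᵐ x ∂μ, x ∈ s)
    (ht : ∀ᵐ y ∂ν, y ∈ t) : ∀ᵐ p ∂μ.prod ν, p ∈ s ×ˢ t :=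
  (Measure.quasiMeasurePreserving_fst.ae hs).and (Measure.quasiMeasurePreserving_snd.ae ht)

lemma integrable_of_ae_mem_of_continuousOn {α : Type*} [TopologicalSpace α] [T2Space α]
    [MeasurableSpace α] [OpensMeasurableSpace α] {μ : Measure α} [IsFiniteMeasure μ]
    {K : Set α} {f : α → ℝ} (hK : IsCompact K) (hμK : ∀ᵐ x ∂μ, x ∈ K) (hf : ContinuousOn f K) :
    Integrable f μ := by
  simpa only [IntegrableOn, Measure.restrict_eq_self_of_ae_mem hμK] using
    hf.integrableOn_compact (μ := μ) hK

structure IsProbOnIcc (lo hi : ℝ) (μ : Measure ℝ) : Prop where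
  isProbabilityMeasure : IsProbabilityMeasure μ
  ae_mem : ∀ᵐ x ∂μ, x ∈ Icc lo hi

namespace IsProbOnIcc

variable {lo hi : ℝ} {μ ν κ : Measure ℝ}

lemma lo_le_hi (h : IsProbOnIcc lo hi μ) : lo ≤ hi := by
  have := h.isProbabilityMeasure
  obtain ⟨x, hx⟩ := h.ae_mem.exists
  exact hx.1.trans hx.2

lemma mono {lo' hi' : ℝ} (h : IsProbOnIcc lo hi μ) (hlo : lo' ≤ lo) (hhi : hi ≤ hi') :
    IsProbOnIcc lo' hi' μ :=
  ⟨h.isProbabilityMeasure, h.ae_mem.mono fun _ hx => Icc_subset_Icc hlo hhi hx⟩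

lemma integrable_of_continuousOn (h : IsProbOnIcc lo hi μ) {f : ℝ → ℝ}
    (hf : ContinuousOn f (Icc lo hi)) : Integrable f μ :=
  have := h.isProbabilityMeasure
  integrable_of_ae_mem_of_continuousOn isCompact_Icc h.ae_mem hf

lemma integrable_of_continuous (h : IsProbOnIcc lo hi μ) {f : ℝ → ℝ} (hf : Continuous f) :
    Integrable f μ :=
  h.integrable_of_continuousOn hf.continuousOn

lemma integrable_prod_of_continuousOn (h : IsProbOnIcc lo hi μ)
    (h' : IsProbOnIcc lo hi ν) {F : ℝ × ℝ → ℝ} (hF : ContinuousOn F (Icc lo hi ×ˢ Icc lo hi)) :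
    Integrable F (μ.prod ν) :=
  have := h.isProbabilityMeasure
  have := h'.isProbabilityMeasure
  integrable_of_ae_mem_of_continuousOn (isCompact_Icc.prod isCompact_Icc)
    (ae_mem_prod h.ae_mem h'.ae_mem) hF

lemma integrable_prod_of_continuous (h : IsProbOnIcc lo hi μ)
    (h' : IsProbOnIcc lo hi ν) {F : ℝ × ℝ → ℝ} (hF : Continuous F) :
    Integrable F (μ.prod ν) :=
  h.integrable_prod_of_continuousOn h' hF.continuousOn

lemma integral_mem (h : IsProbOnIcc lo hi μ) : ∫ x, x ∂μ ∈ Icc lo hi := by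
  have := h.isProbabilityMeasure
  have hid := h.integrable_of_continuous continuous_id
  constructor
  · simpa using integral_mono_ae (integrable_const lo) hid (h.ae_mem.mono fun _ hx => hx.1)
  · simpa using integral_mono_ae hid (integrable_const hi) (h.ae_mem.mono fun _ hx => hx.2)

lemma seriesLaw (h : IsProbOnIcc lo hi μ) : IsProbOnIcc (2 * lo) (2 * hi) (_root_.seriesLaw μ) := by
  have := h.isProbabilityMeasure
  refine ⟨inferInstance, ?_⟩
  refine (ae_map_iff measurable_Sfun.aemeasurable measurableSet_Icc).2 ?_
  filter_upwards [ae_mem_prod h.ae_mem h.ae_mem] with p ⟨⟨h₁, h₂⟩, h₃, h₄⟩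
  constructor <;> simp only [Sfun] <;> linarith

lemma map_par (h : IsProbOnIcc (2 * lo) (2 * hi) κ) (hlo : 0 < lo) :
    IsProbOnIcc lo hi ((κ.prod κ).map par) := by
  have := h.isProbabilityMeasure
  refine ⟨Measure.isProbabilityMeasure_map measurable_par.aemeasurable, ?_⟩
  refine (ae_map_iff measurable_par.aemeasurable measurableSet_Icc).2 ?_
  filter_upwards [ae_mem_prod h.ae_mem h.ae_mem] with p hp
  exact par_mem_Icc hlo hp.1 hp.2

lemma Tq {q : ℝ} (hq : q ∈ Icc (0 : ℝ) 1) (h : IsProbOnIcc lo hi μ) (hlo : 0 < lo) :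
    IsProbOnIcc lo (2 * hi) (Tq q μ) := by
  have := h.isProbabilityMeasure
  have hκ := h.seriesLaw
  have hpar := (hκ.map_par hlo).mono le_rfl (by linarith [h.lo_le_hi] : hi ≤ 2 * hi)
  have := hκ.isProbabilityMeasure
  have := hpar.isProbabilityMeasure
  rw [Tq_eq]
  refine ⟨⟨?_⟩, ?_⟩
  · simp only [Measure.add_apply, Measure.smul_apply, smul_eq_mul, measure_univ, mul_one]
    rw [← ENNReal.ofReal_add (sub_nonneg.2 hq.2) hq.1, sub_add_cancel, ENNReal.ofReal_one]
  · rw [ae_add_measure_iff]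
    exact ⟨Measure.ae_smul_measure ((hκ.mono (by linarith) le_rfl).ae_mem) _,
      Measure.ae_smul_measure hpar.ae_mem _⟩

lemma integral_seriesLaw (h : IsProbOnIcc lo hi μ) :
    ∫ x, x ∂(_root_.seriesLaw μ) = 2 * ∫ x, x ∂μ := by
  have := h.isProbabilityMeasure
  rw [_root_.seriesLaw, integral_map (f := fun x => x) measurable_Sfun.aemeasurable
      aestronglyMeasurable_id]
  simp only [Sfun]
  rw [integral_add (h.integrable_prod_of_continuous h continuous_fst)
      (h.integrable_prod_of_continuous h continuous_snd),
    integral_fun_fst (fun x : ℝ => x), integral_fun_snd (fun x : ℝ => x)]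
  simp only [probReal_univ, one_smul]
  ring

lemma integral_sq_seriesLaw (h : IsProbOnIcc lo hi μ) :
    ∫ x, x ^ 2 ∂(_root_.seriesLaw μ) = 2 * ∫ x, x ^ 2 ∂μ + 2 * (∫ x, x ∂μ) ^ 2 := by
  have := h.isProbabilityMeasure
  have hsq (p : ℝ × ℝ) : Sfun p ^ 2 = (p.1 ^ 2 + p.2 ^ 2) + 2 * (p.1 * p.2) := by
    simp only [Sfun]; ring
  have i₁ : Integrable (fun p : ℝ × ℝ => p.1 ^ 2) (μ.prod μ) :=
    h.integrable_prod_of_continuous h (by fun_prop)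
  have i₂ : Integrable (fun p : ℝ × ℝ => p.2 ^ 2) (μ.prod μ) :=
    h.integrable_prod_of_continuous h (by fun_prop)
  have i₃ : Integrable (fun p : ℝ × ℝ => 2 * (p.1 * p.2)) (μ.prod μ) :=
    h.integrable_prod_of_continuous h (by fun_prop)
  have i₁₂ : Integrable (fun p : ℝ × ℝ => p.1 ^ 2 + p.2 ^ 2) (μ.prod μ) := i₁.add i₂
  rw [_root_.seriesLaw, integral_map (f := fun x => x ^ 2) measurable_Sfun.aemeasurable
    (by fun_prop)]
  simp only [hsq]
  rw [integral_add i₁₂ i₃, integral_add i₁ i₂,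
    integral_fun_fst (fun x : ℝ => x ^ 2), integral_fun_snd (fun x : ℝ => x ^ 2),
    integral_const_mul, integral_prod_mul (fun x : ℝ => x) (fun x : ℝ => x)]
  simp only [probReal_univ, one_smul]
  ring

lemma integrable_comp_par (h : IsProbOnIcc lo hi κ) (hlo : 0 < lo) {f : ℝ → ℝ}
    (hf : ContinuousOn f (Ioi 0)) : Integrable (f ∘ par) (κ.prod κ) := by
  have hbox : Icc lo hi ×ˢ Icc lo hi ⊆ Ioi 0 ×ˢ Ioi 0 :=
    prod_mono (fun x hx => hlo.trans_le hx.1) (fun x hx => hlo.trans_le hx.1)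
  refine h.integrable_prod_of_continuousOn h (hf.comp (continuousOn_par.mono hbox) ?_)
  exact fun p hp => par_pos (hbox hp).1 (hbox hp).2

lemma integral_par_ge (h : IsProbOnIcc lo hi κ) (hlo : 0 < lo) (t : ℝ) :
    2 * t * (∫ x, x ∂κ) ^ 2 - 2 * (∫ x, x ^ 2 ∂κ) * ∫ x, x ∂κ ≤
      t ^ 2 * ∫ p, par p ∂(κ.prod κ) := by
  have := h.isProbabilityMeasure
  have i₁ : Integrable (fun p : ℝ × ℝ => 2 * t * (p.1 * p.2)) (κ.prod κ) :=
    h.integrable_prod_of_continuous h (by fun_prop)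
  have i₂ : Integrable (fun p : ℝ × ℝ => p.1 ^ 2 * p.2) (κ.prod κ) :=
    h.integrable_prod_of_continuous h (by fun_prop)
  have i₃ : Integrable (fun p : ℝ × ℝ => p.1 * p.2 ^ 2) (κ.prod κ) :=
    h.integrable_prod_of_continuous h (by fun_prop)
  have hpoint : ∀ᵐ p ∂κ.prod κ,
      2 * t * (p.1 * p.2) - p.1 ^ 2 * p.2 - p.1 * p.2 ^ 2 ≤ t ^ 2 * par p := by
    filter_upwards [ae_mem_prod h.ae_mem h.ae_mem] with p ⟨h₁, h₂⟩
    have ha : 0 < p.1 := hlo.trans_le h₁.1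
    have hb : 0 < p.2 := hlo.trans_le h₂.1
    linarith [mul_mul_sub_le_sq_mul_par ha.le hb.le (add_pos ha hb) t]
  have i₁₂ : Integrable (fun p : ℝ × ℝ => 2 * t * (p.1 * p.2) - p.1 ^ 2 * p.2) (κ.prod κ) :=
    i₁.sub i₂
  have ipar : Integrable par (κ.prod κ) := h.integrable_comp_par hlo continuousOn_id
  have hmono : ∫ p, 2 * t * (p.1 * p.2) - p.1 ^ 2 * p.2 - p.1 * p.2 ^ 2 ∂κ.prod κ ≤
      ∫ p, t ^ 2 * par p ∂κ.prod κ :=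
    integral_mono_ae (i₁₂.sub i₃) (ipar.const_mul (t ^ 2)) hpoint
  rw [integral_sub i₁₂ i₃, integral_sub i₁ i₂, integral_const_mul, integral_const_mul,
    integral_prod_mul (fun x : ℝ => x) (fun x : ℝ => x),
    integral_prod_mul (fun x : ℝ => x ^ 2) (fun x : ℝ => x),
    integral_prod_mul (fun x : ℝ => x) (fun x : ℝ => x ^ 2)] at hmono
  linarith

lemma integral_par_sq_le (h : IsProbOnIcc lo hi κ) (hlo : 0 < lo) :
    ∫ p, par p ^ 2 ∂(κ.prod κ) ≤ (∫ x, x ∂κ) ^ 2 / 4 := by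
  have := h.isProbabilityMeasure
  have hmono := integral_mono_ae (h.integrable_comp_par hlo (continuous_pow 2).continuousOn)
    ((h.integrable_prod_of_continuous h
      (by fun_prop : Continuous fun p : ℝ × ℝ => p.1 * p.2)).div_const 4)
    (by
      filter_upwards [ae_mem_prod h.ae_mem h.ae_mem] with p ⟨h₁, h₂⟩
      exact par_sq_le (hlo.trans_le h₁.1).le (hlo.trans_le h₂.1).le
        (add_pos (hlo.trans_le h₁.1) (hlo.trans_le h₂.1)))
  rwa [integral_div, integral_prod_mul (fun x : ℝ => x) (fun x : ℝ => x), ← sq] at hmono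

end IsProbOnIcc

section MomentRecursion

variable {q lo hi : ℝ} {μ : Measure ℝ}

lemma mul_integral_le_integral_Tq (hq : q ∈ Icc (0 : ℝ) 1) (h : IsProbOnIcc lo hi μ)
    (hlo : 0 < lo) (hsq : ∫ x, x ^ 2 ∂μ ≤ 2 * (∫ x, x ∂μ) ^ 2) :
    (2 - 4 / 3 * q) * ∫ x, x ∂μ ≤ ∫ x, x ∂(Tq q μ) := by
  have := h.isProbabilityMeasure
  have hκ := h.seriesLaw
  have hm : 0 < ∫ x, x ∂μ := hlo.trans_le h.integral_mem.1
  -- `t = 6 m` is the optimal choice when `∫ x ^ 2 ∂μ = 2 m ^ 2`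
  have hpar := hκ.integral_par_ge (by linarith) (6 * ∫ x, x ∂μ)
  rw [h.integral_seriesLaw, h.integral_sq_seriesLaw] at hpar
  rw [integral_Tq (f := fun x => x) hq measurable_id (hκ.integrable_of_continuous continuous_id)
    (hκ.integrable_comp_par (by linarith) continuousOn_id), h.integral_seriesLaw]
  have hP : 2 / 3 * ∫ x, x ∂μ ≤ ∫ p, par p ∂(seriesLaw μ).prod (seriesLaw μ) := by
    nlinarith [mul_pos hm hm]
  nlinarith [hq.1, hq.2]

lemma integral_sq_Tq_le (hq : q ∈ Icc (0 : ℝ) 1) (h : IsProbOnIcc lo hi μ) (hlo : 0 < lo)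
    (hsq : ∫ x, x ^ 2 ∂μ ≤ 2 * (∫ x, x ∂μ) ^ 2) :
    ∫ x, x ^ 2 ∂(Tq q μ) ≤ (6 - 5 * q) * (∫ x, x ∂μ) ^ 2 := by
  have := h.isProbabilityMeasure
  have hκ := h.seriesLaw
  have hpar := hκ.integral_par_sq_le (by linarith)
  rw [h.integral_seriesLaw] at hpar
  rw [integral_Tq (f := fun x => x ^ 2) hq (measurable_id.pow_const 2)
    (hκ.integrable_of_continuous (continuous_pow 2))
    (hκ.integrable_comp_par (by linarith) (continuous_pow 2).continuousOn),
    h.integral_sq_seriesLaw]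
  nlinarith [hq.1, hq.2]

end MomentRecursion

lemma isProbOnIcc_mu {q : ℝ} (hq : q ∈ Icc (0 : ℝ) 1) (n : ℕ) :
    IsProbOnIcc 1 (2 ^ n) (mu q n) := by
  induction n with
  | zero =>
    exact ⟨Measure.dirac.isProbabilityMeasure, (ae_dirac_iff measurableSet_Icc).2 (by simp)⟩
  | succ n ih => rw [mu_succ, pow_succ']; exact ih.Tq hq one_pos

lemma pow_le_integral_mu {q : ℝ} (hq : q ∈ Icc (0 : ℝ) 1)
    (hq' : 6 - 5 * q ≤ 2 * (2 - 4 / 3 * q) ^ 2) (n : ℕ) :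
    (2 - 4 / 3 * q) ^ n ≤ ∫ x, x ∂(mu q n) := by
  suffices (2 - 4 / 3 * q) ^ n ≤ ∫ x, x ∂(mu q n) ∧
      ∫ x, x ^ 2 ∂(mu q n) ≤ 2 * (∫ x, x ∂(mu q n)) ^ 2 from this.1
  induction n with
  | zero => simp [mu]
  | succ n ih =>
    obtain ⟨hpow, hsq⟩ := ih
    have h := isProbOnIcc_mu hq n
    have hc : 0 ≤ 2 - 4 / 3 * q := by linarith [hq.2]
    have hm : 0 ≤ ∫ x, x ∂(mu q n) := zero_le_one.trans h.integral_mem.1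
    have hmean := mul_integral_le_integral_Tq hq h one_pos hsq
    have hsq' := integral_sq_Tq_le hq h one_pos hsq
    rw [← mu_succ] at hmean hsq'
    refine ⟨by rw [pow_succ']; exact (mul_le_mul_of_nonneg_left hpow hc).trans hmean, ?_⟩
    have := pow_le_pow_left₀ (mul_nonneg hc hm) hmean 2
    nlinarith

structure IsMonoConcave (f : ℝ → ℝ) : Prop where
  measurable : Measurable f
  monotoneOn : MonotoneOn f (Ioi 0)
  concaveOn : ConcaveOn ℝ (Ioi 0) f

/-- The increasing concave order, for measures carried by `(0, ∞)`. -/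
def IcvLe (μ ν : Measure ℝ) : Prop :=
  ∀ f, IsMonoConcave f → ∫ x, f x ∂μ ≤ ∫ x, f x ∂ν

lemma isMonoConcave_id : IsMonoConcave id :=
  ⟨measurable_id, monotoneOn_id, concaveOn_id (convex_Ioi 0)⟩

lemma isMonoConcave_add_const (c : ℝ) : IsMonoConcave (· + c) :=
  ⟨measurable_add_const c, fun _ _ _ _ h => by simpa using h,
    (concaveOn_id (convex_Ioi 0)).add_const c⟩

lemma isMonoConcave_par_left {b : ℝ} (hb : 0 < b) : IsMonoConcave (fun a => par (a, b)) := by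
  refine ⟨measurable_par.comp (measurable_id.prodMk measurable_const), ?_, convex_Ioi 0, ?_⟩
  · intro x hx y hy hxy
    have hx : (0 : ℝ) < x := hx
    have hy : (0 : ℝ) < y := hy
    simp only [par]
    rw [div_le_div_iff₀ (by linarith) (by linarith)]
    nlinarith [mul_nonneg (mul_pos hb hb).le (sub_nonneg.2 hxy)]
  · intro x hx y hy α β hα hβ hαβ
    have hx : (0 : ℝ) < x := hx
    have hy : (0 : ℝ) < y := hy
    obtain rfl : β = 1 - α := by linarith
    have hz : 0 < α * x + (1 - α) * y + b := by nlinarith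
    have key : par (α * x + (1 - α) * y, b) - (α * par (x, b) + (1 - α) * par (y, b)) =
        α * (1 - α) * b ^ 2 * (x - y) ^ 2 / ((x + b) * (y + b) * (α * x + (1 - α) * y + b)) := by
      simp only [par]
      field_simp
      ring
    have : 0 ≤ α * (1 - α) * b ^ 2 * (x - y) ^ 2 /
        ((x + b) * (y + b) * (α * x + (1 - α) * y + b)) := by
      apply div_nonneg _ (by positivity)
      exact mul_nonneg (mul_nonneg (mul_nonneg hα hβ) (sq_nonneg b)) (sq_nonneg _)
    simp only [smul_eq_mul]
    linarith

namespace IsMonoConcave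

variable {f : ℝ → ℝ}

lemma continuousOn (hf : IsMonoConcave f) : ContinuousOn f (Ioi 0) := by
  simpa only [interior_Ioi] using hf.concaveOn.continuousOn_interior

lemma comp (hf : IsMonoConcave f) {g : ℝ → ℝ} (hg : IsMonoConcave g)
    (hmaps : MapsTo g (Ioi 0) (Ioi 0)) : IsMonoConcave (f ∘ g) := by
  refine ⟨hf.measurable.comp hg.measurable, hf.monotoneOn.comp hg.monotoneOn hmaps,
    convex_Ioi 0, fun x hx y hy a b ha hb hab => ?_⟩
  have hcomb : a • x + b • y ∈ Ioi (0 : ℝ) := convex_Ioi 0 hx hy ha hb hab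
  calc a • f (g x) + b • f (g y) ≤ f (a • g x + b • g y) :=
        hf.concaveOn.2 (hmaps hx) (hmaps hy) ha hb hab
    _ ≤ f (g (a • x + b • y)) :=
        hf.monotoneOn (convex_Ioi 0 (hmaps hx) (hmaps hy) ha hb hab) (hmaps hcomb)
          (hg.concaveOn.2 hx hy ha hb hab)

lemma integrable (hf : IsMonoConcave f) {lo hi : ℝ} {μ : Measure ℝ} (h : IsProbOnIcc lo hi μ)
    (hlo : 0 < lo) : Integrable f μ :=
  h.integrable_of_continuousOn (hf.continuousOn.mono fun _ hx => hlo.trans_le hx.1)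

end IsMonoConcave

namespace IsProbOnIcc

variable {lo hi : ℝ} {μ ν : Measure ℝ}

lemma icvLe_dirac_integral (h : IsProbOnIcc lo hi μ) (hlo : 0 < lo) :
    IcvLe μ (Measure.dirac (∫ x, x ∂μ)) := by
  intro f hf
  have := h.isProbabilityMeasure
  have hIcc : Icc lo hi ⊆ Ioi 0 := fun _ hx => hlo.trans_le hx.1
  rw [integral_dirac]
  exact (hf.concaveOn.subset hIcc (convex_Icc lo hi)).le_map_integral
    (hf.continuousOn.mono hIcc) isClosed_Icc h.ae_mem
    (h.integrable_of_continuous continuous_id) (hf.integrable h hlo)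

lemma integrable_prod_of_monotoneOn (hμ : IsProbOnIcc lo hi μ) (hν : IsProbOnIcc lo hi ν)
    (hlo : 0 < lo) {F : ℝ → ℝ → ℝ} (hF : Measurable fun p : ℝ × ℝ => F p.1 p.2)
    (hF₁ : ∀ y > 0, MonotoneOn (F · y) (Ioi 0)) (hF₂ : ∀ x > 0, MonotoneOn (F x ·) (Ioi 0)) :
    Integrable (fun p : ℝ × ℝ => F p.1 p.2) (μ.prod ν) := by
  have := hμ.isProbabilityMeasure
  have := hν.isProbabilityMeasure
  have hhi : 0 < hi := hlo.trans_le hμ.lo_le_hi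
  refine Integrable.of_bound hF.aestronglyMeasurable (max |F lo lo| |F hi hi|) ?_
  filter_upwards [ae_mem_prod hμ.ae_mem hν.ae_mem] with p ⟨⟨hx₁, hx₂⟩, hy₁, hy₂⟩
  have hx : 0 < p.1 := hlo.trans_le hx₁
  have hy : 0 < p.2 := hlo.trans_le hy₁
  rw [Real.norm_eq_abs]
  refine abs_le_max_abs_abs ?_ ?_
  · exact (hF₁ lo hlo hlo hx hx₁).trans (hF₂ p.1 hx hlo hy hy₁)
  · exact (hF₁ p.2 hy hx hhi hx₂).trans (hF₂ hi hhi hy hhi hy₂)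

lemma isMonoConcave_integral (hν : IsProbOnIcc lo hi ν) (hlo : 0 < lo) {F : ℝ → ℝ → ℝ}
    (hF : Measurable fun p : ℝ × ℝ => F p.1 p.2) (hF₁ : ∀ y > 0, IsMonoConcave (F · y))
    (hF₂ : ∀ x > 0, IsMonoConcave (F x ·)) : IsMonoConcave fun x => ∫ y, F x y ∂ν := by
  have hint (x : ℝ) (hx : x ∈ Ioi 0) : Integrable (F x ·) ν := (hF₂ x hx).integrable hν hlo
  have hν₀ : ∀ᵐ y ∂ν, 0 < y := hν.ae_mem.mono fun _ hy => hlo.trans_le hy.1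
  have := hν.isProbabilityMeasure
  refine ⟨(hF.stronglyMeasurable.integral_prod_right (ν := ν)).measurable, ?_, convex_Ioi 0, ?_⟩
  · intro x hx x' hx' hxx'
    refine integral_mono_ae (hint x hx) (hint x' hx') ?_
    filter_upwards [hν₀] with y hy
    exact (hF₁ y hy).monotoneOn hx hx' hxx'
  · intro x hx z hz a b ha hb hab
    have hcomb : ∫ y, a * F x y + b * F z y ∂ν ≤ ∫ y, F (a • x + b • z) y ∂ν :=
      integral_mono_ae (((hint x hx).const_mul a).add ((hint z hz).const_mul b))
      (hint _ (convex_Ioi 0 hx hz ha hb hab)) (by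
        filter_upwards [hν₀] with y hy
        exact (hF₁ y hy).concaveOn.2 hx hz ha hb hab)
    rwa [integral_add ((hint x hx).const_mul a) ((hint z hz).const_mul b), integral_const_mul,
      integral_const_mul] at hcomb

end IsProbOnIcc

namespace IcvLe

variable {lo hi : ℝ} {μ ν : Measure ℝ}

lemma integral_prod_le (hle : IcvLe μ ν) (hμ : IsProbOnIcc lo hi μ) (hν : IsProbOnIcc lo hi ν)
    (hlo : 0 < lo) {F : ℝ → ℝ → ℝ} (hF : Measurable fun p : ℝ × ℝ => F p.1 p.2)
    (hF₁ : ∀ y > 0, IsMonoConcave (F · y)) (hF₂ : ∀ x > 0, IsMonoConcave (F x ·)) :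
    ∫ p, F p.1 p.2 ∂μ.prod μ ≤ ∫ p, F p.1 p.2 ∂ν.prod ν := by
  have := hμ.isProbabilityMeasure
  have := hν.isProbabilityMeasure
  have hint {ρ τ : Measure ℝ} (hρ : IsProbOnIcc lo hi ρ) (hτ : IsProbOnIcc lo hi τ) :=
    hρ.integrable_prod_of_monotoneOn hτ hlo hF (fun y hy => (hF₁ y hy).monotoneOn)
      (fun x hx => (hF₂ x hx).monotoneOn)
  calc ∫ p, F p.1 p.2 ∂μ.prod μ = ∫ x, ∫ y, F x y ∂μ ∂μ := integral_prod _ (hint hμ hμ)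
    _ ≤ ∫ x, ∫ y, F x y ∂ν ∂μ := by
      refine integral_mono_ae (hint hμ hμ).integral_prod_left (hint hμ hν).integral_prod_left ?_
      filter_upwards [hμ.ae_mem] with x hx
      exact hle _ (hF₂ x (hlo.trans_le hx.1))
    _ ≤ ∫ x, ∫ y, F x y ∂ν ∂ν := hle _ (hν.isMonoConcave_integral hlo hF hF₁ hF₂)
    _ = ∫ p, F p.1 p.2 ∂ν.prod ν := (integral_prod _ (hint hν hν)).symm

lemma seriesLaw (hle : IcvLe μ ν) (hμ : IsProbOnIcc lo hi μ) (hν : IsProbOnIcc lo hi ν)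
    (hlo : 0 < lo) : IcvLe (_root_.seriesLaw μ) (_root_.seriesLaw ν) := by
  intro f hf
  have hmaps (c : ℝ) (hc : 0 < c) : MapsTo (· + c) (Ioi 0) (Ioi 0) :=
    fun x (hx : 0 < x) => show 0 < x + c by linarith
  simp only [_root_.seriesLaw, integral_map measurable_Sfun.aemeasurable
    hf.measurable.aestronglyMeasurable, Sfun]
  refine hle.integral_prod_le hμ hν hlo (F := fun x y => f (x + y))
    (hf.measurable.comp measurable_Sfun)
    (fun y hy => hf.comp (isMonoConcave_add_const y) (hmaps y hy)) (fun x hx => ?_)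
  simpa only [Function.comp_def, add_comm x] using hf.comp (isMonoConcave_add_const x) (hmaps x hx)

lemma Tq {q : ℝ} (hq : q ∈ Icc (0 : ℝ) 1) (hle : IcvLe μ ν) (hμ : IsProbOnIcc lo hi μ)
    (hν : IsProbOnIcc lo hi ν) (hlo : 0 < lo) : IcvLe (Tq q μ) (Tq q ν) := by
  intro f hf
  have := hμ.isProbabilityMeasure
  have := hν.isProbabilityMeasure
  have hlo₂ : 0 < 2 * lo := by linarith
  have hmaps (c : ℝ) (hc : 0 < c) : MapsTo (fun a => par (a, c)) (Ioi 0) (Ioi 0) :=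
    fun x (hx : 0 < x) => par_pos hx hc
  have hpar := (hle.seriesLaw hμ hν hlo).integral_prod_le hμ.seriesLaw hν.seriesLaw hlo₂
    (F := fun a b => f (par (a, b))) (hf.measurable.comp measurable_par)
    (fun b hb => hf.comp (isMonoConcave_par_left hb) (hmaps b hb))
    (fun a ha => by
      simpa only [Function.comp_def, par_comm a] using
        hf.comp (isMonoConcave_par_left ha) (hmaps a ha))
  rw [integral_Tq hq hf.measurable (hf.integrable hμ.seriesLaw hlo₂)
      (hμ.seriesLaw.integrable_comp_par hlo₂ hf.continuousOn),
    integral_Tq hq hf.measurable (hf.integrable hν.seriesLaw hlo₂)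
      (hν.seriesLaw.integrable_comp_par hlo₂ hf.continuousOn)]
  exact add_le_add (mul_le_mul_of_nonneg_left (hle.seriesLaw hμ hν hlo f hf) (by linarith [hq.2]))
    (mul_le_mul_of_nonneg_left hpar hq.1)

lemma iterate_Tq {q : ℝ} (hq : q ∈ Icc (0 : ℝ) 1) (hle : IcvLe μ ν) (hμ : IsProbOnIcc lo hi μ)
    (hν : IsProbOnIcc lo hi ν) (hlo : 0 < lo) (n : ℕ) :
    IcvLe ((_root_.Tq q)^[n] μ) ((_root_.Tq q)^[n] ν) := by
  induction n generalizing μ ν hi with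
  | zero => exact hle
  | succ n ih =>
    exact ih (hle.Tq hq hμ hν hlo) (hμ.Tq hq hlo) (hν.Tq hq hlo)

end IcvLe

lemma map_prod_map_mul_left {t : ℝ} {g : ℝ × ℝ → ℝ} (hg : Measurable g)
    (hhom : ∀ p : ℝ × ℝ, g (t * p.1, t * p.2) = t * g p) (μ ν : Measure ℝ) [SFinite μ]
    [SFinite ν] :
    ((μ.map (t * ·)).prod (ν.map (t * ·))).map g = ((μ.prod ν).map g).map (t * ·) := by
  have hm : Measurable (t * · : ℝ → ℝ) := measurable_const_mul t
  rw [Measure.map_prod_map _ _ hm hm, Measure.map_map hg (hm.prodMap hm), Measure.map_map hm hg]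
  exact congrArg (Measure.map · (μ.prod ν)) (funext hhom)

lemma Tq_map_mul_left (q t : ℝ) (μ : Measure ℝ) [SFinite μ] :
    Tq q (μ.map (t * ·)) = (Tq q μ).map (t * ·) := by
  have hS : seriesLaw (μ.map (t * ·)) = (seriesLaw μ).map (t * ·) :=
    map_prod_map_mul_left measurable_Sfun (fun p => mul_add t p.1 p.2 |>.symm) μ μ
  rw [Tq_eq, Tq_eq, hS, map_prod_map_mul_left measurable_par (fun p => par_mul_mul t p.1 p.2),
    Measure.map_add _ _ (measurable_const_mul t), Measure.map_smul, Measure.map_smul]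

lemma iterate_Tq_dirac (q t : ℝ) (n : ℕ) :
    (Tq q)^[n] (Measure.dirac t) = (mu q n).map (t * ·) := by
  induction n with
  | zero => simp [mu, Measure.map_dirac' (measurable_const_mul t)]
  | succ n ih =>
    rw [Function.iterate_succ_apply', ih, Tq_map_mul_left, ← mu_succ]

lemma integral_mu_add_le {q : ℝ} (hq : q ∈ Icc (0 : ℝ) 1) (n k : ℕ) :
    ∫ x, x ∂(mu q (n + k)) ≤ (∫ x, x ∂(mu q n)) * ∫ x, x ∂(mu q k) := by
  have hk := isProbOnIcc_mu hq k
  have hdirac : IsProbOnIcc 1 (2 ^ k) (Measure.dirac (∫ x, x ∂(mu q k))) :=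
    ⟨inferInstance, (ae_dirac_iff measurableSet_Icc).2 hk.integral_mem⟩
  have hmono := (hk.icvLe_dirac_integral one_pos).iterate_Tq hq hk hdirac one_pos n id
    isMonoConcave_id
  have hadd : (Tq q)^[n] (mu q k) = mu q (n + k) := (Function.iterate_add_apply _ n k _).symm
  rw [hadd, iterate_Tq_dirac, integral_map (measurable_const_mul _).aemeasurable
    aestronglyMeasurable_id] at hmono
  simp only [id] at hmono
  rwa [integral_const_mul, mul_comm] at hmono

lemma exists_tendsto_log_div_of_submultiplicative {a : ℕ → ℝ} {c : ℝ} (hc : 0 < c)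
    (hpow : ∀ n, c ^ n ≤ a n) (hmul : ∀ m n, a (m + n) ≤ a m * a n) :
    ∃ α, Tendsto (fun n : ℕ => 1 / (n : ℝ) * Real.log (a n)) atTop (nhds α) ∧
      Real.log c ≤ α := by
  have ha (n : ℕ) : 0 < a n := (pow_pos hc n).trans_le (hpow n)
  have hsub : Subadditive fun n => Real.log (a n) := fun m n => by
    rw [← Real.log_mul (ha m).ne' (ha n).ne']
    exact Real.log_le_log (ha _) (hmul m n)
  have hlow (n : ℕ) (hn : 1 ≤ n) : Real.log c ≤ Real.log (a n) / n := by
    rw [le_div_iff₀ (by exact_mod_cast hn), mul_comm, ← Real.log_pow]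
    exact Real.log_le_log (pow_pos hc n) (hpow n)
  have hbdd : BddBelow (range fun n : ℕ => Real.log (a n) / n) := by
    refine ⟨min (Real.log c) 0, ?_⟩
    rintro _ ⟨_ | n, rfl⟩
    · simp
    · exact (min_le_left _ _).trans (hlow _ n.succ_pos)
  have hlim := hsub.tendsto_lim hbdd
  refine ⟨hsub.lim, hlim.congr fun n => by rw [one_div, inv_mul_eq_div], ?_⟩
  exact ge_of_tendsto hlim (eventually_atTop.2 ⟨1, hlow⟩)

theorem stmt3 :
    (∀ n : ℕ, ((14 - 4 * Real.sqrt 5) / 3) ^ n ≤ ∫ z, z ∂(mu (Real.sqrt 5 - 2) n)) ∧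
    (∃ α : ℝ,
      Tendsto (fun n : ℕ =>
          (1 / (n : ℝ)) * Real.log (∫ z, z ∂(mu (Real.sqrt 5 - 2) n))) atTop (nhds α) ∧
      Real.log ((14 - 4 * Real.sqrt 5) / 3) ≤ α) ∧
    0 < Real.log ((14 - 4 * Real.sqrt 5) / 3) := by
  have h5 : Real.sqrt 5 ^ 2 = 5 := Real.sq_sqrt (by norm_num)
  have h5lo : 2.2 ≤ Real.sqrt 5 := by nlinarith [Real.sqrt_nonneg 5]
  have h5hi : Real.sqrt 5 ≤ 2.3 := by nlinarith [Real.sqrt_nonneg 5]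
  have hq : Real.sqrt 5 - 2 ∈ Icc (0 : ℝ) 1 := ⟨by linarith, by linarith⟩
  have hc : 2 - 4 / 3 * (Real.sqrt 5 - 2) = (14 - 4 * Real.sqrt 5) / 3 := by ring
  have hq' : 6 - 5 * (Real.sqrt 5 - 2) ≤ 2 * (2 - 4 / 3 * (Real.sqrt 5 - 2)) ^ 2 := by nlinarith
  have hlow := pow_le_integral_mu hq hq'
  rw [hc] at hlow
  have hc₁ : 1 < (14 - 4 * Real.sqrt 5) / 3 := by linarith
  exact ⟨hlow, exists_tendsto_log_div_of_submultiplicative (by linarith) hlow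
    (integral_mu_add_le hq), Real.log_pos hc₁⟩
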